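/- arXiv:1905.09129 — 2 statements merged into one kernel-verified Lean document; each statement's English description precedes it below -/
import Mathlib

section
/- If γₙ is a root of r (i.e., η(uⁿ + γₙ·Δt·∑ᵢ bᵢ fᵢ) − η(uⁿ) = γₙ·Δt·∑ᵢ bᵢ ⟨η'(yᵢ), fᵢ⟩), and if the system is entropy conservative (⟨η'(u), f(t,u)⟩ = 0 for all u, t), then the relaxation Runge–Kutta update u^{n+1}_γ = uⁿ + γₙ·Δt·∑ᵢ bᵢ fᵢ satisfies η(u^{n+1}_γ) = η(uⁿ). -/
theorem stmt_1_general
    {H : Type*} [NormedAddCommGroup H] [InnerProductSpace ℝ H]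
    (η : H → ℝ) (η' : H → H) (f : ℝ → H → H)
    (s : ℕ) (b c : Fin s → ℝ) (y : Fin s → H)
    (un : H) (tn Δt γn : ℝ)
    (fi : Fin s → H) (hfi : ∀ i, fi i = f (tn + c i * Δt) (y i))
    (hcons : ∀ t u, (inner ℝ (η' u) (f t u) : ℝ) = 0)
    (hroot : η (un + (γn * Δt) • ∑ i, b i • fi i) - η un
      = γn * Δt * ∑ i, b i * (inner ℝ (η' (y i)) (fi i) : ℝ)) :
    η (un + (γn * Δt) • ∑ i, b i • fi i) = η un := by
  have hproduction : ∑ i, b i * (inner ℝ (η' (y i)) (fi i) : ℝ) = 0 :=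
    Finset.sum_eq_zero fun i _ => by rw [hfi i, hcons, mul_zero]
  rwa [hproduction, mul_zero, sub_eq_zero] at hroot

theorem stmt_1
    {H : Type*} [NormedAddCommGroup H] [InnerProductSpace ℝ H] [CompleteSpace H]
    (η : H → ℝ) (η' : H → H) (f : ℝ → H → H)
    (s : ℕ) (b c : Fin s → ℝ) (y : Fin s → H)
    (un : H) (tn Δt γn : ℝ)
    (fi : Fin s → H) (hfi : ∀ i, fi i = f (tn + c i * Δt) (y i))
    (hcons : ∀ t u, (inner ℝ (η' u) (f t u) : ℝ) = 0)
    (hroot : η (un + (γn * Δt) • ∑ i, b i • fi i) - η un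
      = γn * Δt * ∑ i, b i * (inner ℝ (η' (y i)) (fi i) : ℝ)) :
    η (un + (γn * Δt) • ∑ i, b i • fi i) = η un :=
  stmt_1_general η η' f s b c y un tn Δt γn fi hfi hcons hroot
end

section
/- If γₙ ≥ 0 is a root of the relaxation function r, all Runge–Kutta weights satisfy bᵢ ≥ 0, and the system is entropy dissipative (⟨η'(u), f(t,u)⟩ ≤ 0 for all u, t), then the relaxation update u^{n+1}_γ = uⁿ + γₙ·Δt·∑ᵢ bᵢ fᵢ satisfies η(u^{n+1}_γ) ≤ η(uⁿ), provided Δt ≥ 0. -/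
theorem sum_mul_inner_nonpos_of_dissipative
    {H : Type*} [NormedAddCommGroup H] [InnerProductSpace ℝ H]
    (η' : H → H) (f : ℝ → H → H) {s : ℕ} (b t : Fin s → ℝ) (y : Fin s → H)
    (hb : ∀ i, 0 ≤ b i) (hdiss : ∀ t u, (inner ℝ (η' u) (f t u) : ℝ) ≤ 0) :
    ∑ i, b i * (inner ℝ (η' (y i)) (f (t i) (y i)) : ℝ) ≤ 0 :=
  Finset.sum_nonpos fun i _ => mul_nonpos_of_nonneg_of_nonpos (hb i) (hdiss _ _)

theorem stmt_2_general
    {H : Type*} [NormedAddCommGroup H] [InnerProductSpace ℝ H]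
    (η : H → ℝ) (η' : H → H) (f : ℝ → H → H)
    (s : ℕ) (b c : Fin s → ℝ) (y : Fin s → H)
    (un : H) (tn Δt γn : ℝ)
    (fi : Fin s → H) (hfi : ∀ i, fi i = f (tn + c i * Δt) (y i))
    (hγ : 0 ≤ γn) (hb : ∀ i, 0 ≤ b i) (hΔt : 0 ≤ Δt)
    (hdiss : ∀ t u, (inner ℝ (η' u) (f t u) : ℝ) ≤ 0)
    (hroot : η (un + (γn * Δt) • ∑ i, b i • fi i) - η un
      = γn * Δt * ∑ i, b i * (inner ℝ (η' (y i)) (fi i) : ℝ)) :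
    η (un + (γn * Δt) • ∑ i, b i • fi i) ≤ η un := by
  have hproduction : ∑ i, b i * (inner ℝ (η' (y i)) (fi i) : ℝ) ≤ 0 := by
    simpa only [hfi] using
      sum_mul_inner_nonpos_of_dissipative η' f b (fun i => tn + c i * Δt) y hb hdiss
  have := mul_nonpos_of_nonneg_of_nonpos (mul_nonneg hγ hΔt) hproduction
  linarith

theorem stmt_2
    {H : Type*} [NormedAddCommGroup H] [InnerProductSpace ℝ H] [CompleteSpace H]
    (η : H → ℝ) (η' : H → H) (f : ℝ → H → H)
    (s : ℕ) (b c : Fin s → ℝ) (y : Fin s → H)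
    (un : H) (tn Δt γn : ℝ)
    (fi : Fin s → H) (hfi : ∀ i, fi i = f (tn + c i * Δt) (y i))
    (hγ : 0 ≤ γn) (hb : ∀ i, 0 ≤ b i) (hΔt : 0 ≤ Δt)
    (hdiss : ∀ t u, (inner ℝ (η' u) (f t u) : ℝ) ≤ 0)
    (hroot : η (un + (γn * Δt) • ∑ i, b i • fi i) - η un
      = γn * Δt * ∑ i, b i * (inner ℝ (η' (y i)) (fi i) : ℝ)) :
    η (un + (γn * Δt) • ∑ i, b i • fi i) ≤ η un :=
  stmt_2_general η η' f s b c y un tn Δt γn fi hfi hγ hb hΔt hdiss hroot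
end
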